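/- arXiv:1006.1095 — 2 statements merged into one kernel-verified Lean document; each statement's English description precedes it below -/
import Mathlib

section
/- A diversity (X, δ) is injective if and only if it is hyperconvex. -/
open scoped Classical

noncomputable section

universe u

/-- A diversity: axioms (D1) and (D2). -/
def IsDiversity {X : Type*} (δ : Finset X → ℝ) : Prop :=
  (∀ A, 0 ≤ δ A) ∧ (∀ A, δ A = 0 ↔ A.card ≤ 1) ∧
    ∀ A B C : Finset X, B ≠ ∅ → δ (A ∪ C) ≤ δ (A ∪ B) + δ (B ∪ C)

/-- A non-expansive map between diversities. -/
def IsNonexpansive {Y Z : Type*} (δY : Finset Y → ℝ) (δZ : Finset Z → ℝ) (φ : Y → Z) : Prop :=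
  ∀ A : Finset Y, δZ (A.image φ) ≤ δY A

/-- An embedding of diversities: injective and preserving the diversity of finite sets. -/
def IsDivEmbedding {Y Z : Type*} (δY : Finset Y → ℝ) (δZ : Finset Z → ℝ) (φ : Y → Z) : Prop :=
  Function.Injective φ ∧ ∀ A : Finset Y, δZ (A.image φ) = δY A

/-- An injective diversity: every non-expansive map into it extends along any embedding. -/
def InjectiveDiversity {X : Type u} (δ : Finset X → ℝ) : Prop :=
  ∀ (Y₁ Y₂ : Type u) (δ₁ : Finset Y₁ → ℝ) (δ₂ : Finset Y₂ → ℝ),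
    IsDiversity δ₁ → IsDiversity δ₂ →
    ∀ (π : Y₁ → Y₂) (φ : Y₁ → X), IsDivEmbedding δ₁ δ₂ π → IsNonexpansive δ₁ δ φ →
      ∃ ψ : Y₂ → X, IsNonexpansive δ₂ δ ψ ∧ φ = ψ ∘ π

/-- A hyperconvex diversity. -/
def DivHyperconvex {X : Type*} (δ : Finset X → ℝ) : Prop :=
  ∀ r : Finset X → ℝ,
    (∀ 𝓐 : Finset (Finset X), δ (𝓐.sup id) ≤ ∑ A ∈ 𝓐, r A) →
    ∃ z : X, ∀ Y : Finset X, δ ({z} ∪ Y) ≤ r Y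

/-!
Injective ⇒ hyperconvex: for admissible `r`, the cheapest cover of a set by sets `B` charged `r B`
and by chains of sets charged their diversity lies below `r` and measures the sets through a new
point `z` in a diversity on `Option X`. Extending the identity of `X` along `some` sends `z` to the
required centre; if the cheapest cover of some `{x}` costs nothing, `x` itself is one.

Hyperconvex ⇒ injective: by Zorn's lemma there is a non-expansive partial extension of `φ` with
maximal graph. At a point `y₀` outside its domain, the radii `r B = inf δ₂ ({y₀} ∪ F.fst)` over
finite pieces `F` of the graph with `B ⊆ F.snd`, made finite by a penalty for the uncovered part of
`B`, are admissible, so hyperconvexity provides a value at `y₀`, contradicting maximality.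
-/

open Finset

namespace IsDiversity

variable {X : Type*} {δ : Finset X → ℝ}

theorem nonneg (hδ : IsDiversity δ) (A : Finset X) : 0 ≤ δ A := hδ.1 A

theorem eq_zero_of_card_le_one (hδ : IsDiversity δ) {A : Finset X} (h : #A ≤ 1) : δ A = 0 :=
  (hδ.2.1 A).2 h

theorem empty (hδ : IsDiversity δ) : δ ∅ = 0 := hδ.eq_zero_of_card_le_one (by simp)

theorem singleton (hδ : IsDiversity δ) (x : X) : δ {x} = 0 :=
  hδ.eq_zero_of_card_le_one (by simp)

theorem triangle (hδ : IsDiversity δ) (A : Finset X) {B : Finset X} (C : Finset X)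
    (hB : B.Nonempty) : δ (A ∪ C) ≤ δ (A ∪ B) + δ (B ∪ C) :=
  hδ.2.2 A B C hB.ne_empty

theorem mono (hδ : IsDiversity δ) : Monotone δ := by
  refine Finset.monotone_iff_forall_le_insert.2 fun A x _ => ?_
  have h := hδ.triangle A ∅ (singleton_nonempty x)
  rwa [union_empty, union_empty, hδ.singleton, add_zero, union_comm, ← insert_eq] at h

theorem union_le_add_of_mem (hδ : IsDiversity δ) {A B : Finset X} {x : X} (hA : x ∈ A)
    (hB : x ∈ B) : δ (A ∪ B) ≤ δ A + δ B := by
  have h := hδ.triangle A B (singleton_nonempty x)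
  rwa [union_eq_left.2 (singleton_subset_iff.2 hA), union_eq_right.2 (singleton_subset_iff.2 hB)]
    at h

theorem insert_sup_le_sum (hδ : IsDiversity δ) {ι : Type*} (s : Finset ι) (f : ι → Finset X)
    (x : X) : δ (insert x (s.sup f)) ≤ ∑ i ∈ s, δ (insert x (f i)) := by
  induction s using Finset.induction_on with
  | empty => simp [hδ.singleton]
  | insert i s hi ih =>
    rw [sup_insert, sup_eq_union, sum_insert hi, insert_union_distrib]
    exact (hδ.union_le_add_of_mem (mem_insert_self x _) (mem_insert_self x _)).trans
      (add_le_add_right ih _)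

end IsDiversity

theorem le_sum_csInf {ι : Type*} {s : Finset ι} {S : ι → Set ℝ} {a : ℝ}
    (hS : ∀ i ∈ s, (S i).Nonempty) (h : ∀ c : ι → ℝ, (∀ i ∈ s, c i ∈ S i) → a ≤ ∑ i ∈ s, c i) :
    a ≤ ∑ i ∈ s, sInf (S i) := by
  induction s using Finset.induction_on generalizing a with
  | empty => simpa using h 0 (by simp)
  | insert j s hj ih =>
    rw [sum_insert hj, ← sub_le_iff_le_add]
    refine le_csInf (hS j (mem_insert_self j s)) fun x hx => ?_
    rw [sub_le_comm]
    refine ih (fun i hi => hS i (mem_insert_of_mem hi)) fun c hc => ?_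
    have hc' : ∀ i ∈ insert j s, Function.update c j x i ∈ S i := by
      intro i hi
      rcases eq_or_ne i j with rfl | hij
      · simpa using hx
      · simpa [hij] using hc i ((mem_insert.1 hi).resolve_left hij)
    have := h _ hc'
    rw [sum_insert hj, Function.update_self, sum_update_of_notMem hj] at this
    linarith

theorem le_csInf_add_csInf {s t : Set ℝ} {a : ℝ} (hs : s.Nonempty) (ht : t.Nonempty)
    (h : ∀ x ∈ s, ∀ y ∈ t, a ≤ x + y) : a ≤ sInf s + sInf t := by
  rw [← sub_le_iff_le_add']
  refine le_csInf ht fun y hy => ?_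
  rw [sub_le_comm]
  exact le_csInf hs fun x hx => by linarith [h x hx y hy]

theorem sum_union_le_add_of_nonneg {ι : Type*} [DecidableEq ι] {s t : Finset ι} {f : ι → ℝ}
    (hf : ∀ i, 0 ≤ f i) : ∑ i ∈ s ∪ t, f i ≤ ∑ i ∈ s, f i + ∑ i ∈ t, f i := by
  rw [← sum_union_inter]
  exact le_add_of_nonneg_right (sum_nonneg fun i _ => hf i)

section CoverHull

variable {X : Type*}

def chainUnion : List (Finset X) → Finset X
  | [] => ∅
  | D :: L => D ∪ chainUnion L

@[simp] theorem chainUnion_nil : chainUnion ([] : List (Finset X)) = ∅ := rfl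

@[simp] theorem chainUnion_cons (D : Finset X) (L : List (Finset X)) :
    chainUnion (D :: L) = D ∪ chainUnion L := rfl

@[simp] theorem chainUnion_append (L₁ L₂ : List (Finset X)) :
    chainUnion (L₁ ++ L₂) = chainUnion L₁ ∪ chainUnion L₂ := by
  induction L₁ with
  | nil => simp
  | cons D L ih => simp [ih, union_assoc]

def IsAttachedChain (U : Finset X) : List (Finset X) → Prop
  | [] => True
  | D :: L => (D ∩ (U ∪ chainUnion L)).Nonempty ∧ IsAttachedChain U L

theorem IsAttachedChain.mono {U V : Finset X} (hUV : U ⊆ V) :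
    ∀ {L : List (Finset X)}, IsAttachedChain U L → IsAttachedChain V L
  | [], _ => trivial
  | _ :: _, ⟨hD, hL⟩ =>
    ⟨hD.mono (inter_subset_inter_left (union_subset_union hUV le_rfl)), hL.mono hUV⟩

theorem IsAttachedChain.append {U : Finset X} :
    ∀ {L₁ L₂ : List (Finset X)}, IsAttachedChain U L₁ → IsAttachedChain U L₂ →
      IsAttachedChain U (L₁ ++ L₂)
  | [], _, _, h₂ => h₂
  | _ :: _, _, ⟨hD, hL₁⟩, h₂ =>
    ⟨hD.mono (inter_subset_inter_left (by simpa using union_subset_union_right subset_union_left)),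
      hL₁.append h₂⟩

theorem IsDiversity.le_add_sum_of_isAttachedChain {δ : Finset X → ℝ} (hδ : IsDiversity δ) :
    ∀ {U : Finset X} {L : List (Finset X)}, IsAttachedChain U L →
      δ (U ∪ chainUnion L) ≤ δ U + (L.map δ).sum
  | _, [], _ => by simp
  | U, D :: L, ⟨⟨x, hx⟩, hL⟩ => by
    rw [mem_inter] at hx
    have hsplit : δ ((U ∪ chainUnion L) ∪ D) ≤ δ (U ∪ chainUnion L) + δ D :=
      hδ.union_le_add_of_mem hx.2 hx.1
    rw [chainUnion_cons, union_left_comm, union_comm, List.map_cons, List.sum_cons]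
    linarith [hδ.le_add_sum_of_isAttachedChain hL]

def IsAdmissible (δ r : Finset X → ℝ) : Prop :=
  ∀ 𝓐 : Finset (Finset X), δ (𝓐.sup id) ≤ ∑ A ∈ 𝓐, r A

def coverCosts (δ r : Finset X → ℝ) (A : Finset X) : Set ℝ :=
  {c | ∃ (𝓑 : Finset (Finset X)) (L : List (Finset X)), A ⊆ 𝓑.sup id ∪ chainUnion L ∧
    IsAttachedChain (𝓑.sup id) L ∧ c = ∑ B ∈ 𝓑, r B + (L.map δ).sum}

/-- The diversity of `A ∪ {z}` for the new point `z` of the one-point extension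
`optionDiversity δ r`. Attached chains are what make it satisfy the triangle inequality
`coverHull_union_le_add`. -/
def coverHull (δ r : Finset X → ℝ) (A : Finset X) : ℝ := sInf (coverCosts δ r A)

variable {δ r : Finset X → ℝ}

theorem IsAdmissible.nonneg (hδ : IsDiversity δ) (hr : IsAdmissible δ r) (B : Finset X) :
    0 ≤ r B := by
  have h := hr {B}
  rw [sup_singleton, id, sum_singleton] at h
  exact (hδ.nonneg B).trans h

theorem coverCosts_nonempty (A : Finset X) : (coverCosts δ r A).Nonempty :=
  ⟨_, {A}, [], by simp, trivial, rfl⟩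

theorem le_of_mem_coverCosts (hδ : IsDiversity δ) (hr : IsAdmissible δ r)
    (𝓨 : Finset (Finset X)) {A : Finset X} {c : ℝ} (hc : c ∈ coverCosts δ r A) :
    δ (𝓨.sup id ∪ A) ≤ ∑ Y ∈ 𝓨, r Y + c := by
  obtain ⟨𝓑, L, hA, hL, rfl⟩ := hc
  have hcover : 𝓨.sup id ∪ A ⊆ (𝓨 ∪ 𝓑).sup id ∪ chainUnion L := by
    rw [sup_union, sup_eq_union, union_assoc]
    exact union_subset_union le_rfl hA
  calc δ (𝓨.sup id ∪ A) ≤ δ ((𝓨 ∪ 𝓑).sup id ∪ chainUnion L) := hδ.mono hcover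
    _ ≤ δ ((𝓨 ∪ 𝓑).sup id) + (L.map δ).sum :=
      hδ.le_add_sum_of_isAttachedChain (hL.mono (sup_mono subset_union_right))
    _ ≤ ∑ B ∈ 𝓨 ∪ 𝓑, r B + (L.map δ).sum := by gcongr; exact hr _
    _ ≤ ∑ Y ∈ 𝓨, r Y + (∑ B ∈ 𝓑, r B + (L.map δ).sum) := by
      rw [← add_assoc]; gcongr; exact sum_union_le_add_of_nonneg (hr.nonneg hδ)

theorem bddBelow_coverCosts (hδ : IsDiversity δ) (hr : IsAdmissible δ r) (A : Finset X) :
    BddBelow (coverCosts δ r A) :=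
  ⟨0, fun _ hc => by simpa using (hδ.nonneg _).trans (le_of_mem_coverCosts hδ hr ∅ hc)⟩

theorem le_sum_add_coverHull (hδ : IsDiversity δ) (hr : IsAdmissible δ r)
    (𝓨 : Finset (Finset X)) (A : Finset X) :
    δ (𝓨.sup id ∪ A) ≤ ∑ Y ∈ 𝓨, r Y + coverHull δ r A := by
  rw [← sub_le_iff_le_add']
  exact le_csInf (coverCosts_nonempty A) fun c hc =>
    sub_le_iff_le_add'.2 (le_of_mem_coverCosts hδ hr 𝓨 hc)

theorem le_coverHull (hδ : IsDiversity δ) (hr : IsAdmissible δ r) (A : Finset X) :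
    δ A ≤ coverHull δ r A := by
  simpa using le_sum_add_coverHull hδ hr ∅ A

theorem coverHull_nonneg (hδ : IsDiversity δ) (hr : IsAdmissible δ r) (A : Finset X) :
    0 ≤ coverHull δ r A :=
  (hδ.nonneg A).trans (le_coverHull hδ hr A)

theorem coverHull_le (hδ : IsDiversity δ) (hr : IsAdmissible δ r) (A : Finset X) :
    coverHull δ r A ≤ r A :=
  csInf_le (bddBelow_coverCosts hδ hr A) ⟨{A}, [], by simp, trivial, by simp⟩

theorem coverHull_empty (hδ : IsDiversity δ) (hr : IsAdmissible δ r) : coverHull δ r ∅ = 0 :=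
  le_antisymm (csInf_le (bddBelow_coverCosts hδ hr ∅) ⟨∅, [], by simp, trivial, by simp⟩)
    (coverHull_nonneg hδ hr ∅)

theorem coverHull_mono (hδ : IsDiversity δ) (hr : IsAdmissible δ r) :
    Monotone (coverHull δ r) := fun _ _ hAC =>
  csInf_le_csInf (bddBelow_coverCosts hδ hr _) (coverCosts_nonempty _)
    fun _ ⟨𝓑, L, hC, hL, hc⟩ => ⟨𝓑, L, subset_trans hAC hC, hL, hc⟩

theorem coverHull_union_le (hδ : IsDiversity δ) (hr : IsAdmissible δ r) (A C : Finset X) :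
    coverHull δ r (A ∪ C) ≤ coverHull δ r A + coverHull δ r C := by
  refine le_csInf_add_csInf (coverCosts_nonempty A) (coverCosts_nonempty C)
    fun c₁ ⟨𝓑₁, L₁, hA, hL₁, hc₁⟩ c₂ ⟨𝓑₂, L₂, hC, hL₂, hc₂⟩ => ?_
  have hmem : ∑ B ∈ 𝓑₁ ∪ 𝓑₂, r B + ((L₁ ++ L₂).map δ).sum ∈ coverCosts δ r (A ∪ C) := by
    refine ⟨𝓑₁ ∪ 𝓑₂, L₁ ++ L₂, ?_, ?_, rfl⟩
    · rw [sup_union, sup_eq_union, chainUnion_append, union_union_union_comm]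
      exact union_subset_union hA hC
    · rw [sup_union]
      exact (hL₁.mono le_sup_left).append (hL₂.mono le_sup_right)
  refine (csInf_le (bddBelow_coverCosts hδ hr _) hmem).trans ?_
  rw [hc₁, hc₂, List.map_append, List.sum_append]
  linarith [sum_union_le_add_of_nonneg (s := 𝓑₁) (t := 𝓑₂) (hr.nonneg hδ)]

theorem coverHull_union_le_add_union (hδ : IsDiversity δ) (hr : IsAdmissible δ r)
    (A B C : Finset X) : coverHull δ r (A ∪ C) ≤ coverHull δ r (A ∪ B) + coverHull δ r (B ∪ C) :=
  (coverHull_mono hδ hr (union_subset_union subset_union_left subset_union_right)).trans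
    (coverHull_union_le hδ hr _ _)

theorem coverHull_union_le_add (hδ : IsDiversity δ) (hr : IsAdmissible δ r) (A : Finset X)
    {B : Finset X} (C : Finset X) (hB : B.Nonempty) :
    coverHull δ r (A ∪ C) ≤ coverHull δ r (A ∪ B) + δ (B ∪ C) := by
  rw [← sub_le_iff_le_add]
  refine le_csInf (coverCosts_nonempty _) fun c ⟨𝓑, L, hAB, hL, hc⟩ => ?_
  rw [sub_le_iff_le_add]
  obtain ⟨b, hb⟩ := hB
  have hmem : c + δ (B ∪ C) ∈ coverCosts δ r (A ∪ C) := by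
    refine ⟨𝓑, (B ∪ C) :: L, fun x hx => ?_,
      ⟨⟨b, mem_inter.2 ⟨mem_union_left C hb, hAB (mem_union_right A hb)⟩⟩, hL⟩,
      by rw [hc, List.map_cons, List.sum_cons]; ring⟩
    have hABx := @hAB x
    simp only [chainUnion_cons, mem_union] at hx hABx ⊢
    tauto
  exact csInf_le (bddBelow_coverCosts hδ hr _) hmem

theorem coverHull_eq_zero_iff (hδ : IsDiversity δ) (hr : IsAdmissible δ r)
    (hpos : ∀ x, 0 < coverHull δ r {x}) {A : Finset X} : coverHull δ r A = 0 ↔ A = ∅ := by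
  refine ⟨fun h => eq_empty_of_forall_notMem fun x hx => ?_, fun h => h ▸ coverHull_empty hδ hr⟩
  have := coverHull_mono hδ hr (singleton_subset_iff.2 hx)
  linarith [hpos x]

end CoverHull

section OnePointExtension

variable {X : Type*} {δ r : Finset X → ℝ}

def optionDiversity (δ r : Finset X → ℝ) (A : Finset (Option X)) : ℝ :=
  if none ∈ A then coverHull δ r A.eraseNone else δ A.eraseNone

theorem optionDiversity_image_some (δ r : Finset X → ℝ) [DecidableEq (Option X)]
    (A : Finset X) : optionDiversity δ r (A.image some) = δ A := by
  simp [optionDiversity]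

theorem optionDiversity_insert_none (δ r : Finset X → ℝ) (A : Finset X) :
    optionDiversity δ r (insert none (A.image some)) = coverHull δ r A := by
  rw [optionDiversity, if_pos (mem_insert_self _ _)]
  congr 1
  ext
  simp

theorem isDiversity_optionDiversity (hδ : IsDiversity δ) (hr : IsAdmissible δ r)
    (hpos : ∀ x, 0 < coverHull δ r {x}) : IsDiversity (optionDiversity δ r) := by
  refine ⟨fun A => ?_, fun A => ?_, fun A B C hB => ?_⟩
  · unfold optionDiversity
    split_ifs
    exacts [coverHull_nonneg hδ hr _, hδ.nonneg _]
  · have hcard := card_eraseNone_eq_card_erase A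
    unfold optionDiversity
    split_ifs with hA
    · rw [coverHull_eq_zero_iff hδ hr hpos, ← card_eq_zero, hcard, ← card_erase_add_one hA]
      omega
    · rw [erase_eq_of_notMem hA] at hcard
      rw [← hcard]
      exact hδ.2.1 _
  · have hb : none ∉ B → B.eraseNone.Nonempty := fun hB' => by
      obtain ⟨_ | x, hx⟩ := nonempty_iff_ne_empty.2 hB
      exacts [absurd hx hB', ⟨x, mem_eraseNone.2 hx⟩]
    have hsub := coverHull_union_le_add_union hδ hr A.eraseNone B.eraseNone C.eraseNone
    unfold optionDiversity
    simp only [eraseNone_union, mem_union]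
    by_cases hA : none ∈ A <;> by_cases hB' : none ∈ B <;> by_cases hC : none ∈ C <;>
      simp only [hA, hB', hC, if_true, if_false, or_true, or_false]
    · exact hsub
    · exact hsub
    · exact hsub
    · exact coverHull_union_le_add hδ hr _ _ (hb hB')
    · exact hsub
    · exact (le_coverHull hδ hr _).trans hsub
    · rw [union_comm A.eraseNone, union_comm A.eraseNone, add_comm, union_comm B.eraseNone]
      exact coverHull_union_le_add hδ hr _ _ (hb hB')
    · exact hδ.triangle _ _ (hb hB')

theorem DivHyperconvex.of_injectiveDiversity {X : Type u} {δ : Finset X → ℝ}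
    (hδ : IsDiversity δ) (hinj : InjectiveDiversity δ) : DivHyperconvex δ := by
  intro r hr
  by_cases hzero : ∃ x, coverHull δ r {x} = 0
  · obtain ⟨x, hx⟩ := hzero
    refine ⟨x, fun Y => ?_⟩
    simpa [hx] using le_sum_add_coverHull hδ hr {Y} {x}
  simp only [not_exists] at hzero
  have hpos : ∀ x, 0 < coverHull δ r {x} := fun x =>
    (coverHull_nonneg hδ hr {x}).lt_of_ne' (hzero x)
  obtain ⟨ψ, hψ, hψsome⟩ := hinj X (Option X) δ (optionDiversity δ r) hδ
    (isDiversity_optionDiversity hδ hr hpos) some id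
    ⟨Option.some_injective X, fun A => by convert optionDiversity_image_some δ r A⟩
    (by simp [IsNonexpansive])
  refine ⟨ψ none, fun Y => ?_⟩
  have h := hψ (insert none (Y.image (some : X → Option X)))
  rw [image_insert, image_image, ← hψsome, image_id, optionDiversity_insert_none] at h
  rw [← insert_eq]
  exact h.trans (coverHull_le hδ hr Y)

end OnePointExtension

section GraphExtension

variable {Y X : Type*} (δY : Finset Y → ℝ) (δ : Finset X → ℝ)

def IsNonexpansiveGraph (G : Set (Y × X)) : Prop :=
  (∀ p ∈ G, ∀ q ∈ G, p.1 = q.1 → p.2 = q.2) ∧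
    ∀ F : Finset (Y × X), ↑F ⊆ G → δ (F.image Prod.snd) ≤ δY (F.image Prod.fst)

variable {δY δ}

theorem isNonexpansiveGraph_sUnion {c : Set (Set (Y × X))}
    (hc : ∀ G ∈ c, IsNonexpansiveGraph δY δ G) (hchain : IsChain (· ⊆ ·) c) (hne : c.Nonempty) :
    IsNonexpansiveGraph δY δ (⋃₀ c) := by
  refine ⟨fun p ⟨G₁, hG₁, hp⟩ q ⟨G₂, hG₂, hq⟩ hpq => ?_, fun F hF => ?_⟩
  · rcases hchain.total hG₁ hG₂ with h | h
    exacts [(hc G₂ hG₂).1 p (h hp) q hq hpq, (hc G₁ hG₁).1 p hp q (h hq) hpq]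
  · obtain ⟨G, hG, hFG⟩ := hchain.directedOn.exists_mem_subset_of_finite_of_subset_sUnion hne
      F.finite_toSet hF
    exact (hc G hG).2 F hFG

theorem isNonexpansiveGraph_range {Z : Type*} {δZ : Finset Z → ℝ} {π : Z → Y} {φ : Z → X}
    (hπ : IsDivEmbedding δZ δY π) (hφ : IsNonexpansive δZ δ φ) :
    IsNonexpansiveGraph δY δ (Set.range fun a => (π a, φ a)) := by
  refine ⟨?_, fun F hF => ?_⟩
  · rintro _ ⟨a, rfl⟩ _ ⟨b, rfl⟩ hab
    rw [hπ.1 hab]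
  · rw [← Set.image_univ, subset_set_image_iff] at hF
    obtain ⟨A, -, rfl⟩ := hF
    rw [image_image, image_image]
    exact (hφ A).trans (hπ.2 A).ge

theorem IsNonexpansiveGraph.isNonexpansive {G : Set (Y × X)} (hG : IsNonexpansiveGraph δY δ G)
    {ψ : Y → X} (hψ : ∀ y, (y, ψ y) ∈ G) : IsNonexpansive δY δ ψ := fun A => by
  have h := hG.2 (A.image fun y => (y, ψ y)) fun p hp => by
    obtain ⟨y, -, rfl⟩ := mem_image.1 hp
    exact hψ y
  simpa [image_image, Function.comp_def] using h

theorem IsNonexpansiveGraph.insert_of_le {G : Set (Y × X)} (hG : IsNonexpansiveGraph δY δ G)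
    {y₀ : Y} {z : X} (hy₀ : ∀ x, (y₀, x) ∉ G)
    (hz : ∀ F : Finset (Y × X), ↑F ⊆ G →
      δ (insert z (F.image Prod.snd)) ≤ δY (insert y₀ (F.image Prod.fst))) :
    IsNonexpansiveGraph δY δ (insert (y₀, z) G) := by
  refine ⟨?_, fun F hF => ?_⟩
  · rintro p (rfl | hp) q (rfl | hq) hpq
    · rfl
    · obtain ⟨_, _⟩ := q
      cases hpq
      exact absurd hq (hy₀ _)
    · obtain ⟨_, _⟩ := p
      cases hpq
      exact absurd hp (hy₀ _)
    · exact hG.1 p hp q hq hpq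
  by_cases hzF : (y₀, z) ∈ F
  · have hF' : ↑(F.erase (y₀, z)) ⊆ G := by
      rw [coe_erase, Set.sdiff_singleton_subset_iff]
      exact hF
    rw [← insert_erase hzF, image_insert, image_insert]
    exact hz _ hF'
  · exact hG.2 F fun p hp => (hF hp).resolve_left (ne_of_mem_of_not_mem hp hzF)

end GraphExtension

section Penalty

variable {X : Type*} {δ : Finset X → ℝ}

def penalty (δ : Finset X → ℝ) (x₀ : X) (κ : ℝ) (V : Finset X) : ℝ :=
  δ (insert x₀ V) + if V = ∅ then 0 else κ

theorem penalty_empty (hδ : IsDiversity δ) (x₀ : X) (κ : ℝ) : penalty δ x₀ κ ∅ = 0 := by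
  simp [penalty, hδ.singleton]

theorem penalty_nonneg (hδ : IsDiversity δ) (x₀ : X) {κ : ℝ} (hκ : 0 ≤ κ) (V : Finset X) :
    0 ≤ penalty δ x₀ κ V :=
  add_nonneg (hδ.nonneg _) (ite_nonneg le_rfl hκ)

theorem penalty_sup_le_sum (hδ : IsDiversity δ) (x₀ : X) {κ : ℝ} (hκ : 0 ≤ κ) {ι : Type*}
    (s : Finset ι) (W : ι → Finset X) :
    penalty δ x₀ κ (s.sup W) ≤ ∑ i ∈ s, penalty δ x₀ κ (W i) := by
  unfold penalty
  rw [sum_add_distrib]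
  refine add_le_add (hδ.insert_sup_le_sum s W x₀) ?_
  split_ifs with hsup
  · exact sum_nonneg fun i _ => ite_nonneg le_rfl hκ
  · obtain ⟨i, hi, hWi⟩ : ∃ i ∈ s, W i ≠ ∅ := by
      by_contra! h
      exact hsup (Finset.sup_eq_bot_iff W s |>.2 h)
    calc κ = if W i = ∅ then 0 else κ := (if_neg hWi).symm
      _ ≤ _ := single_le_sum (f := fun i => if W i = ∅ then 0 else κ)
          (fun j _ => ite_nonneg le_rfl hκ) hi

end Penalty

section OnePointGraphExtension

variable {Y X : Type*} {δY : Finset Y → ℝ} {δ : Finset X → ℝ}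

theorem IsNonexpansiveGraph.le_add_penalty (hδ : IsDiversity δ) (hδY : IsDiversity δY)
    {G : Set (Y × X)} (hG : IsNonexpansiveGraph δY δ G) {d₀ : Y} {x₀ : X} (hp₀ : (d₀, x₀) ∈ G)
    (y₀ : Y) {F : Finset (Y × X)} (hF : ↑F ⊆ G) (V : Finset X) :
    δ (F.image Prod.snd ∪ V) ≤
      δY (insert y₀ (F.image Prod.fst)) + penalty δ x₀ (δY {y₀, d₀}) V := by
  have hgraph := hG.2 F hF
  have hF₀ : ↑(insert (d₀, x₀) F) ⊆ G := by
    rw [coe_insert]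
    exact Set.insert_subset hp₀ hF
  have hgraph₀ := hG.2 _ hF₀
  rw [image_insert, image_insert] at hgraph₀
  unfold penalty
  split_ifs with hV
  · rw [hV, union_empty, insert_empty, hδ.singleton, add_zero, add_zero]
    exact hgraph.trans (hδY.mono (subset_insert _ _))
  calc δ (F.image Prod.snd ∪ V)
      ≤ δ (insert x₀ (F.image Prod.snd) ∪ insert x₀ V) :=
        hδ.mono (union_subset_union (subset_insert _ _) (subset_insert _ _))
    _ ≤ δ (insert x₀ (F.image Prod.snd)) + δ (insert x₀ V) :=
        hδ.union_le_add_of_mem (mem_insert_self _ _) (mem_insert_self _ _)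
    _ ≤ δY (insert d₀ (F.image Prod.fst)) + δ (insert x₀ V) := by gcongr
    _ ≤ δY (insert y₀ (F.image Prod.fst) ∪ {y₀, d₀}) + δ (insert x₀ V) := by
        refine add_le_add (hδY.mono fun y => ?_) le_rfl
        simp only [mem_insert, mem_union, mem_singleton]
        tauto
    _ ≤ δY (insert y₀ (F.image Prod.fst)) + δY {y₀, d₀} + δ (insert x₀ V) := by
        gcongr
        exact hδY.union_le_add_of_mem (mem_insert_self _ _) (mem_insert_self _ _)
    _ = _ := by ring

/-- Candidate values of `δ ({z} ∪ B)` for a new value `z` over `y₀`: the part of `B` covered by a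
finite piece `F` of the graph is paid for by `δY ({y₀} ∪ F.fst)`, the rest is attached through the
graph point `(d₀, x₀)`, which costs the surcharge `δY {y₀, d₀}` once that rest is nonempty. -/
def extensionCosts (δY : Finset Y → ℝ) (δ : Finset X → ℝ) (G : Set (Y × X)) (y₀ d₀ : Y)
    (x₀ : X) (B : Finset X) : Set ℝ :=
  {c | ∃ F : Finset (Y × X), ↑F ⊆ G ∧
    c = δY (insert y₀ (F.image Prod.fst)) + penalty δ x₀ (δY {y₀, d₀}) (B \ F.image Prod.snd)}

theorem extensionCosts_nonempty (G : Set (Y × X)) (y₀ d₀ : Y) (x₀ : X) (B : Finset X) :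
    (extensionCosts δY δ G y₀ d₀ x₀ B).Nonempty :=
  ⟨_, ∅, by simp, rfl⟩

theorem sInf_extensionCosts_image_le (hδ : IsDiversity δ) (hδY : IsDiversity δY)
    {G : Set (Y × X)} (y₀ d₀ : Y) (x₀ : X) {F : Finset (Y × X)} (hF : ↑F ⊆ G) :
    sInf (extensionCosts δY δ G y₀ d₀ x₀ (F.image Prod.snd)) ≤
      δY (insert y₀ (F.image Prod.fst)) := by
  refine csInf_le ⟨0, ?_⟩ ⟨F, hF, by rw [sdiff_self, bot_eq_empty, penalty_empty hδ, add_zero]⟩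
  rintro _ ⟨F', -, rfl⟩
  exact add_nonneg (hδY.nonneg _) (penalty_nonneg hδ x₀ (hδY.nonneg _) _)

theorem isAdmissible_extensionCosts (hδ : IsDiversity δ) (hδY : IsDiversity δY)
    {G : Set (Y × X)} (hG : IsNonexpansiveGraph δY δ G) {d₀ : Y} {x₀ : X} (hp₀ : (d₀, x₀) ∈ G)
    (y₀ : Y) : IsAdmissible δ fun B => sInf (extensionCosts δY δ G y₀ d₀ x₀ B) := by
  intro 𝓐
  refine le_sum_csInf (fun B _ => extensionCosts_nonempty G y₀ d₀ x₀ B) fun c hc => ?_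
  choose! F hFG hcF using hc
  set W := fun B => B \ (F B).image Prod.snd
  have hFall : ↑(𝓐.biUnion F) ⊆ G := fun p hp => by
    obtain ⟨B, hB, hpB⟩ := mem_biUnion.1 hp
    exact hFG B hB hpB
  have hcover : 𝓐.sup id ⊆ (𝓐.biUnion F).image Prod.snd ∪ 𝓐.sup W := by
    intro x hx
    obtain ⟨B, hB, hxB⟩ := mem_sup.1 hx
    by_cases hxF : x ∈ (F B).image Prod.snd
    · obtain ⟨p, hp, rfl⟩ := mem_image.1 hxF
      exact mem_union_left _ (mem_image_of_mem _ (mem_biUnion.2 ⟨B, hB, hp⟩))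
    · exact mem_union_right _ (mem_sup.2 ⟨B, hB, mem_sdiff.2 ⟨hxB, hxF⟩⟩)
  have hfst : (𝓐.biUnion F).image Prod.fst = 𝓐.sup fun B => (F B).image Prod.fst := by
    rw [biUnion_image, sup_eq_biUnion]
  calc δ (𝓐.sup id)
      ≤ δ ((𝓐.biUnion F).image Prod.snd ∪ 𝓐.sup W) := hδ.mono hcover
    _ ≤ δY (insert y₀ ((𝓐.biUnion F).image Prod.fst)) + penalty δ x₀ (δY {y₀, d₀}) (𝓐.sup W) :=
        hG.le_add_penalty hδ hδY hp₀ y₀ hFall _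
    _ ≤ ∑ B ∈ 𝓐, δY (insert y₀ ((F B).image Prod.fst)) +
          ∑ B ∈ 𝓐, penalty δ x₀ (δY {y₀, d₀}) (W B) := by
        rw [hfst]
        exact add_le_add (hδY.insert_sup_le_sum _ _ _)
          (penalty_sup_le_sum hδ x₀ (hδY.nonneg _) _ _)
    _ = ∑ B ∈ 𝓐, c B := by
        rw [← sum_add_distrib]
        exact sum_congr rfl fun B hB => (hcF B hB).symm

theorem DivHyperconvex.nonempty (hδ : IsDiversity δ) (h : DivHyperconvex δ) : Nonempty X := by
  by_contra hX
  rw [not_nonempty_iff] at hX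
  obtain ⟨z, -⟩ := h 0 fun 𝓐 => by simp [eq_empty_of_isEmpty (𝓐.sup id), hδ.empty]
  exact hX.false z

theorem IsNonexpansiveGraph.exists_insert (hδ : IsDiversity δ) (hδY : IsDiversity δY)
    (hhyp : DivHyperconvex δ) {G : Set (Y × X)} (hG : IsNonexpansiveGraph δY δ G) {y₀ : Y}
    (hy₀ : ∀ x, (y₀, x) ∉ G) : ∃ z, IsNonexpansiveGraph δY δ (insert (y₀, z) G) := by
  rcases G.eq_empty_or_nonempty with rfl | ⟨⟨d₀, x₀⟩, hp₀⟩
  · obtain ⟨x⟩ := hhyp.nonempty hδ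
    refine ⟨x, hG.insert_of_le hy₀ fun F hF => ?_⟩
    rw [Set.subset_empty_iff, coe_eq_empty] at hF
    simp [hF, hδ.singleton, hδY.singleton]
  · obtain ⟨z, hz⟩ := hhyp _ (isAdmissible_extensionCosts hδ hδY hG hp₀ y₀)
    refine ⟨z, hG.insert_of_le hy₀ fun F hF => ?_⟩
    rw [insert_eq]
    exact (hz _).trans (sInf_extensionCosts_image_le hδ hδY y₀ d₀ x₀ hF)

end OnePointGraphExtension

theorem InjectiveDiversity.of_divHyperconvex {X : Type u} {δ : Finset X → ℝ}
    (hδ : IsDiversity δ) (hhyp : DivHyperconvex δ) : InjectiveDiversity δ := by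
  intro Y₁ Y₂ δ₁ δ₂ _ hδ₂ π φ hπ hφ
  obtain ⟨G, -, hmax⟩ := zorn_subset_nonempty
    {G | IsNonexpansiveGraph δ₂ δ G ∧ Set.range (fun a => (π a, φ a)) ⊆ G}
    (fun c hcS hchain hne => ⟨⋃₀ c,
      ⟨isNonexpansiveGraph_sUnion (fun G hG => (hcS hG).1) hchain hne,
        hne.elim fun G hG => (hcS hG).2.trans (Set.subset_sUnion_of_mem hG)⟩,
      fun _ => Set.subset_sUnion_of_mem⟩)
    _ ⟨isNonexpansiveGraph_range hπ hφ, le_rfl⟩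
  have hG : IsNonexpansiveGraph δ₂ δ G := hmax.1.1
  have hφG : Set.range (fun a => (π a, φ a)) ⊆ G := hmax.1.2
  have htotal : ∀ y, ∃ x, (y, x) ∈ G := by
    by_contra! ⟨y₀, hy₀⟩
    obtain ⟨z, hz⟩ := hG.exists_insert hδ hδ₂ hhyp hy₀
    exact hy₀ z (hmax.2 ⟨hz, hφG.trans (Set.subset_insert _ _)⟩ (Set.subset_insert _ _)
      (Set.mem_insert _ _))
  choose ψ hψ using htotal
  exact ⟨ψ, hG.isNonexpansive hψ, funext fun a => hG.1 _ (hφG ⟨a, rfl⟩) _ (hψ (π a)) rfl⟩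

/-- a diversity is injective if and only if it is hyperconvex. -/
theorem injective_iff_hyperconvex {X : Type u} (δ : Finset X → ℝ) (hδ : IsDiversity δ) :
    InjectiveDiversity δ ↔ DivHyperconvex δ :=
  ⟨DivHyperconvex.of_injectiveDiversity hδ, InjectiveDiversity.of_divHyperconvex hδ⟩

end
end

section
/- Let (X, δ) be a diversity and let φ be a non-expansive map from (T_X, δ_T) to a diversity (Y, δ_Y). If π = φ ∘ κ is an embedding of (X, δ) into (Y, δ_Y), then φ is an embedding of (T_X, δ_T) into (Y, δ_Y). -/
open scoped Classical

noncomputable section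

/-- Membership in `P_X`: `f ∅ = 0` and `Σ_{A ∈ 𝓐} f A ≥ δ (⋃ 𝓐)` for every finite
collection `𝓐` of finite subsets of `X`. -/
def MemP {X : Type*} (δ : Finset X → ℝ) (f : Finset X → ℝ) : Prop :=
  f ∅ = 0 ∧ ∀ 𝓐 : Finset (Finset X), δ (𝓐.sup id) ≤ ∑ A ∈ 𝓐, f A

/-- Membership in the tight span `T_X`: the pointwise-minimal elements of `P_X`. -/
def MemT {X : Type*} (δ : Finset X → ℝ) (f : Finset X → ℝ) : Prop :=
  MemP δ f ∧ ∀ g : Finset X → ℝ, MemP δ g → (∀ A, g A ≤ f A) → g = f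

/-- The function `δ_T` on finite subsets of the tight span: `δ_T ∅ = 0` and for nonempty `F`,
`δ_T F = sup { δ(⋃𝓐) - Σ_{A ∈ 𝓐} inf_{f ∈ F} f A : 𝓐 a finite collection of finite subsets }`. -/
noncomputable def deltaT {X : Type*} (δ : Finset X → ℝ) (F : Finset (Finset X → ℝ)) : ℝ :=
  if F = ∅ then 0
  else sSup {r : ℝ | ∃ 𝓐 : Finset (Finset X),
    r = δ (𝓐.sup id) - ∑ A ∈ 𝓐, sInf ((fun f => f A) '' (F : Set (Finset X → ℝ)))}

/-- The Kuratowski-type map `κ` sends `x` to the function `h_x : A ↦ δ (A ∪ {x})`. -/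
def hfun {X : Type*} (δ : Finset X → ℝ) (x : X) : Finset X → ℝ :=
  fun A => δ (A ∪ {x})

/-!
The inequality `δY (φ F) ≤ δ_T F` is the hypothesis on `φ`; for the reverse, fix `𝓐` and pick for
each `B ∈ 𝓐` some `f_B ∈ F` attaining `inf_{f ∈ F} f B`. For `f ∈ P_X` one has
`δ_T ({f} ∪ κ B) ≤ f B`, so non-expansiveness gives `δY (φ f_B ∪ π B) ≤ inf_{f ∈ F} f B`. Each of
these sets meets `φ F`, so gluing them to `φ F` with (D2) at the common points and using that `π`
is an embedding yields `δ (⋃ 𝓐) ≤ δY (φ F) + Σ_{B ∈ 𝓐} inf_{f ∈ F} f B`.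
If `φ f = φ g`, the same estimate for `F = {f, g}` says that `min f g ∈ P_X`, so minimality forces
`f = min f g = g`.
-/

section TightSpan

variable {X : Type*} {δ : Finset X → ℝ}

namespace IsDiversity

variable (hδ : IsDiversity δ)
include hδ

lemma apply_empty : δ ∅ = 0 := (hδ.2.1 ∅).2 (by simp)

lemma apply_singleton (x : X) : δ {x} = 0 := (hδ.2.1 {x}).2 (by simp)

lemma apply_union_le_of_mem {A B : Finset X} {p : X} (hA : p ∈ A) (hB : p ∈ B) :
    δ (A ∪ B) ≤ δ A + δ B := by
  simpa [Finset.insert_eq_of_mem, hA, hB] using hδ.2.2 A {p} B (by simp)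

lemma le_apply_union (A B : Finset X) : δ A ≤ δ (A ∪ B) := by
  induction B using Finset.induction with
  | empty => simp
  | insert b B _ ih =>
    have h := hδ.2.2 (A ∪ B) {b} ∅ (by simp)
    simp only [Finset.union_empty, Finset.union_singleton, hδ.apply_singleton] at h
    rw [Finset.union_insert]
    linarith

lemma mono_s12 {A B : Finset X} (h : A ⊆ B) : δ A ≤ δ B := by
  simpa [Finset.union_eq_right.2 h] using hδ.le_apply_union A B

lemma apply_union_sup_le {ι : Type*} (C : Finset X) (s : Finset ι) (E : ι → Finset X)
    (w : ι → ℝ) (hE : ∀ i ∈ s, ∃ a ∈ C, δ (insert a (E i)) ≤ w i) :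
    δ (C ∪ s.sup E) ≤ δ C + ∑ i ∈ s, w i := by
  induction s using Finset.induction with
  | empty => simp
  | insert i s hi ih =>
    obtain ⟨a, haC, hai⟩ := hE i (Finset.mem_insert_self i s)
    have hglue : C ∪ (insert i s).sup E = (C ∪ s.sup E) ∪ insert a (E i) := by
      rw [Finset.sup_insert, Finset.union_insert, Finset.insert_eq_of_mem (by simp [haC])]
      ext; simp only [Finset.mem_union, Finset.sup_eq_union]; tauto
    have hstep := hδ.apply_union_le_of_mem (Finset.mem_union_left (s.sup E) haC)
      (Finset.mem_insert_self a (E i))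
    rw [hglue, Finset.sum_insert hi]
    linarith [ih fun j hj => hE j (Finset.mem_insert_of_mem hj)]

end IsDiversity

namespace MemP

variable {f : Finset X → ℝ} (hf : MemP δ f)
include hf

lemma le_apply (A : Finset X) : δ A ≤ f A := by simpa using hf.2 {A}

lemma nonneg (hδ : IsDiversity δ) (A : Finset X) : 0 ≤ f A := (hδ.1 A).trans (hf.le_apply A)

lemma apply_union_sup_le (hδ : IsDiversity δ) (A : Finset X) (𝓑 : Finset (Finset X)) :
    δ (A ∪ 𝓑.sup id) ≤ f A + ∑ B ∈ 𝓑, f B := by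
  have h := hf.2 (insert A 𝓑)
  rw [Finset.sup_insert, id, Finset.sup_eq_union] at h
  by_cases hA : A ∈ 𝓑
  · rw [Finset.insert_eq_of_mem hA] at h
    linarith [hf.nonneg hδ A]
  · rwa [Finset.sum_insert hA] at h

end MemP

lemma MemT.eq_of_memP_inf {f g : Finset X → ℝ} (hf : MemT δ f) (hg : MemT δ g)
    (hfg : MemP δ (f ⊓ g)) : f = g :=
  (hf.2 _ hfg fun _ => inf_le_left).symm.trans (hg.2 _ hfg fun _ => inf_le_right)

lemma hfun_apply_eq (x : X) (A : Finset X) : hfun δ x A = δ (insert x A) := by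
  rw [hfun, Finset.union_singleton]

lemma memP_hfun (hδ : IsDiversity δ) (x : X) : MemP δ (hfun δ x) := by
  refine ⟨by simp [hfun, hδ.apply_singleton], fun 𝓐 => ?_⟩
  calc δ (𝓐.sup id) ≤ δ ({x} ∪ 𝓐.sup id) := hδ.mono_s12 Finset.subset_union_right
    _ ≤ δ {x} + ∑ A ∈ 𝓐, hfun δ x A :=
      hδ.apply_union_sup_le {x} 𝓐 id _ fun A _ => ⟨x, by simp [hfun_apply_eq]⟩
    _ = ∑ A ∈ 𝓐, hfun δ x A := by rw [hδ.apply_singleton, zero_add]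

lemma memT_hfun (hδ : IsDiversity δ) (x : X) : MemT δ (hfun δ x) := by
  refine ⟨memP_hfun hδ x, fun g hg hle => funext fun A => (hle A).antisymm ?_⟩
  have hgx : g {x} = 0 := le_antisymm (by simpa [hfun, hδ.apply_singleton] using hle {x})
    (hg.nonneg hδ {x})
  simpa [hgx, hfun_apply_eq] using hg.apply_union_sup_le hδ A {{x}}

lemma deltaT_of_nonempty {F : Finset (Finset X → ℝ)} (hF : F.Nonempty) :
    deltaT δ F = sSup {r | ∃ 𝓐 : Finset (Finset X),
      r = δ (𝓐.sup id) - ∑ A ∈ 𝓐, F.inf' hF fun f => f A} := by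
  simp only [deltaT, if_neg hF.ne_empty, Finset.inf'_eq_csInf_image]

lemma deltaT_le_of_forall {F : Finset (Finset X → ℝ)} (hF : F.Nonempty) {c : ℝ}
    (h : ∀ 𝓐 : Finset (Finset X), δ (𝓐.sup id) ≤ c + ∑ A ∈ 𝓐, F.inf' hF fun f => f A) :
    deltaT δ F ≤ c := by
  rw [deltaT_of_nonempty hF]
  refine csSup_le ⟨_, ∅, rfl⟩ ?_
  rintro r ⟨𝓐, rfl⟩
  linarith [h 𝓐]

lemma MemP.deltaT_insert_image_hfun_le (hδ : IsDiversity δ) {f : Finset X → ℝ} (hf : MemP δ f)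
    (A : Finset X) : deltaT δ (insert f (A.image (hfun δ))) ≤ f A := by
  refine deltaT_le_of_forall (Finset.insert_nonempty _ _) fun 𝓐 => ?_
  set m := fun B => (insert f (A.image (hfun δ))).inf' (Finset.insert_nonempty _ _) fun g => g B
  -- The minimum at `B` is attained by `f` or by some `h_a` with `a ∈ A`: sets of the first kind
  -- are absorbed into `f A` by the `P_X` inequality, those of the second are glued to `A` at `a`.
  have hm : ∀ B, m B = f B ∨ ∃ a ∈ A, δ (insert a B) ≤ m B := by
    intro B
    obtain ⟨g, hg, hgB⟩ := Finset.exists_mem_eq_inf' (Finset.insert_nonempty f (A.image (hfun δ)))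
      fun g => g B
    rcases Finset.mem_insert.1 hg with rfl | hg
    · exact Or.inl hgB
    · obtain ⟨a, ha, rfl⟩ := Finset.mem_image.1 hg
      exact Or.inr ⟨a, ha, (hfun_apply_eq a B).symm.trans_le hgB.ge⟩
  set 𝓐₁ := 𝓐.filter fun B => m B = f B
  set 𝓐₂ := 𝓐.filter fun B => m B ≠ f B
  have hcover : 𝓐.sup id ⊆ (A ∪ 𝓐₁.sup id) ∪ 𝓐₂.sup id := by
    intro x hx
    obtain ⟨B, hB, hxB⟩ := Finset.mem_sup.1 hx
    by_cases hmB : m B = f B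
    · exact Finset.mem_union_left _ (Finset.mem_union_right _
        (Finset.mem_sup.2 ⟨B, Finset.mem_filter.2 ⟨hB, hmB⟩, hxB⟩))
    · exact Finset.mem_union_right _ (Finset.mem_sup.2 ⟨B, Finset.mem_filter.2 ⟨hB, hmB⟩, hxB⟩)
  have hglue := hδ.apply_union_sup_le (A ∪ 𝓐₁.sup id) 𝓐₂ id m fun B hB => by
    obtain ⟨a, ha, hle⟩ := (hm B).resolve_left (Finset.mem_filter.1 hB).2
    exact ⟨a, Finset.mem_union_left _ ha, hle⟩
  have hsum₁ : ∑ B ∈ 𝓐₁, m B = ∑ B ∈ 𝓐₁, f B :=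
    Finset.sum_congr rfl fun B hB => (Finset.mem_filter.1 hB).2
  have hsplit := Finset.sum_filter_add_sum_filter_not 𝓐 (fun B => m B = f B) m
  linarith [hδ.mono_s12 hcover, hf.apply_union_sup_le hδ A 𝓐₁]

section Embedding

variable {Y : Type*} {δY : Finset Y → ℝ} {φ : (Finset X → ℝ) → Y}

lemma apply_sup_le_image_add_sum_inf' (hδ : IsDiversity δ) (hδY : IsDiversity δY)
    (hφ : ∀ F : Finset (Finset X → ℝ), (∀ f ∈ F, MemT δ f) → δY (F.image φ) ≤ deltaT δ F)
    (hπ : ∀ A : Finset X, δY (A.image fun x => φ (hfun δ x)) = δ A)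
    (F : Finset (Finset X → ℝ)) (hF : ∀ f ∈ F, MemT δ f) (hFne : F.Nonempty)
    (𝓐 : Finset (Finset X)) :
    δ (𝓐.sup id) ≤ δY (F.image φ) + ∑ B ∈ 𝓐, F.inf' hFne fun f => f B := by
  set π := fun x => φ (hfun δ x)
  have hjoin : ∀ B, ∃ y ∈ F.image φ,
      δY (insert y (B.image π)) ≤ F.inf' hFne fun f => f B := by
    intro B
    obtain ⟨g, hg, hgB⟩ := Finset.exists_mem_eq_inf' hFne fun f => f B
    refine ⟨φ g, Finset.mem_image_of_mem φ hg, ?_⟩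
    have hT : ∀ f ∈ insert g (B.image (hfun δ)), MemT δ f := by
      simpa [hF g hg] using fun x _ => memT_hfun hδ x
    calc δY (insert (φ g) (B.image π)) = δY ((insert g (B.image (hfun δ))).image φ) := by
          rw [Finset.image_insert, Finset.image_image]; rfl
      _ ≤ deltaT δ (insert g (B.image (hfun δ))) := hφ _ hT
      _ ≤ g B := (hF g hg).1.deltaT_insert_image_hfun_le hδ B
      _ = _ := hgB.symm
  have hsup : (𝓐.sup id).image π = 𝓐.sup fun B => B.image π :=
    Finset.apply_sup_eq_sup_comp (Finset.image π) (fun _ _ => Finset.image_union _ _)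
      (Finset.image_empty π)
  calc δ (𝓐.sup id) = δY ((𝓐.sup id).image π) := (hπ _).symm
    _ ≤ δY (F.image φ ∪ 𝓐.sup fun B => B.image π) :=
      hδY.mono_s12 (hsup ▸ Finset.subset_union_right)
    _ ≤ _ := hδY.apply_union_sup_le _ 𝓐 _ _ fun B _ => hjoin B

end Embedding

end TightSpan

theorem nonexpansive_on_tightSpan_embedding_general {X Y : Type*}
    (δ : Finset X → ℝ) (δY : Finset Y → ℝ)
    (hδ : IsDiversity δ) (hδY : IsDiversity δY)
    (φ : (Finset X → ℝ) → Y)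
    (hφ : ∀ F : Finset (Finset X → ℝ), (∀ f ∈ F, MemT δ f) →
      δY (F.image φ) ≤ deltaT δ F)
    (hπ : ∀ A : Finset X, δY (A.image fun x => φ (hfun δ x)) = δ A) :
    (∀ f g : Finset X → ℝ, MemT δ f → MemT δ g → φ f = φ g → f = g) ∧
    (∀ F : Finset (Finset X → ℝ), (∀ f ∈ F, MemT δ f) →
      δY (F.image φ) = deltaT δ F) := by
  have hlower := apply_sup_le_image_add_sum_inf' hδ hδY hφ hπ
  refine ⟨fun f g hf hg hfg => hf.eq_of_memP_inf hg ⟨by simp [hf.1.1, hg.1.1], fun 𝓐 => ?_⟩,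
    fun F hF => ?_⟩
  · have hpair : ∀ h ∈ ({f, g} : Finset (Finset X → ℝ)), MemT δ h := by simp [hf, hg]
    simpa [hfg, hδY.apply_singleton] using hlower _ hpair (Finset.insert_nonempty _ _) 𝓐
  · rcases F.eq_empty_or_nonempty with rfl | hFne
    · simp [deltaT, hδY.apply_empty]
    · exact (hφ F hF).antisymm (deltaT_le_of_forall hFne (hlower F hF hFne))

/-- if `φ` is non-expansive from `(T_X, δ_T)` to a diversity `(Y, δY)` and
`π = φ ∘ κ` is an embedding of `(X, δ)` into `(Y, δY)`, then `φ` is an embedding of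
`(T_X, δ_T)` into `(Y, δY)`. -/
theorem nonexpansive_on_tightSpan_embedding {X Y : Type*}
    (δ : Finset X → ℝ) (δY : Finset Y → ℝ)
    (hδ : IsDiversity δ) (hδY : IsDiversity δY)
    (φ : (Finset X → ℝ) → Y)
    (hφ : ∀ F : Finset (Finset X → ℝ), (∀ f ∈ F, MemT δ f) →
      δY (F.image φ) ≤ deltaT δ F)
    (hπinj : Function.Injective fun x : X => φ (hfun δ x))
    (hπ : ∀ A : Finset X, δY (A.image fun x => φ (hfun δ x)) = δ A) :
    (∀ f g : Finset X → ℝ, MemT δ f → MemT δ g → φ f = φ g → f = g) ∧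
    (∀ F : Finset (Finset X → ℝ), (∀ f ∈ F, MemT δ f) →
      δY (F.image φ) = deltaT δ F) :=
  nonexpansive_on_tightSpan_embedding_general δ δY hδ hδY φ hφ hπ
end
end
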